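/- arXiv:1608.01110 — 2 statements merged into one kernel-verified Lean document; each statement's English description precedes it below -/
import Mathlib

section
/- Let 𝒩 be a nonempty set, k a field of characteristic 0, K = k((ε)), φ : 𝒩 → k extended additively to words, and T the K-valued mould with T^∅ = 1 and T^{n₁⋯n_r}(ε) = 1/((φ(n₁)+ε)⋯(φ(n₁)+⋯+φ(n_r)+rε)). Let (U_-, U_+) be the Birkhoff decomposition of T, let S be the k-valued mould with S^{n̲} := constant term (ε⁰-coefficient) of U_+^{n̲} (so S^∅ = 1 and S is invertible in the mould algebra k^𝒩̲), and define the k-valued mould R̃ := S × I_k × S⁻¹ − (∇_φ S) × S⁻¹, regarded as K-valued via the inclusion k ⊂ K. Then ∇_Φ U_- = −R̃ × U_-, where (∇_Φ M)^{n̲}(ε) = (φ(n̲) + r(n̲)ε) M^{n̲}(ε). -/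
open scoped Classical

/-- Shuffle coefficient: the number of ways the word `n` can be obtained by interleaving
the letters of `a` and `b` while preserving their internal orders. -/
noncomputable def sh {𝒩 : Type*} : List 𝒩 → List 𝒩 → List 𝒩 → ℕ
  | [], b, n => if b = n then 1 else 0
  | a, [], n => if a = n then 1 else 0
  | _ :: _, _ :: _, [] => 0
  | x :: a, y :: b, z :: n =>
      (if x = z then sh a (y :: b) n else 0) + (if y = z then sh (x :: a) b n else 0)

/-- Mould multiplication: `(M × N)^n = ∑_{n = a b} M^a N^b`. -/
noncomputable def mmul {𝒩 A : Type*} [Semiring A] (M N : List 𝒩 → A) : List 𝒩 → A :=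
  fun n => ∑ i ∈ Finset.range (n.length + 1), M (n.take i) * N (n.drop i)

/-- The unit mould `𝟙`. -/
noncomputable def munit {𝒩 A : Type*} [Semiring A] : List 𝒩 → A :=
  fun n => if n = [] then 1 else 0

/-- Membership in `K_- = ε⁻¹ k[ε⁻¹]`: all coefficients of nonnegative powers vanish. -/
def Kminus {k : Type*} [Field k] (f : LaurentSeries k) : Prop :=
  ∀ n : ℤ, 0 ≤ n → f.coeff n = 0

/-- Membership in `K_+ = k[[ε]]`: all coefficients of negative powers vanish. -/
def Kplus {k : Type*} [Field k] (f : LaurentSeries k) : Prop :=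
  ∀ n : ℤ, n < 0 → f.coeff n = 0

/-- Additive extension of `φ : 𝒩 → k` to words: `φ(n₁⋯n_r) = φ(n₁) + ⋯ + φ(n_r)`. -/
def phiw {𝒩 k : Type*} [AddCommMonoid k] (φ : 𝒩 → k) (l : List 𝒩) : k :=
  (l.map φ).sum

/-- The mould `I`: value `1` on words of length `1`, and `0` otherwise. -/
noncomputable def Imould {𝒩 A : Type*} [Semiring A] : List 𝒩 → A :=
  fun n => if n.length = 1 then 1 else 0

/-- The indeterminate `ε` of `K = k((ε))`. -/
noncomputable def eps (k : Type*) [Field k] : LaurentSeries k :=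
  HahnSeries.single (1 : ℤ) (1 : k)

/-- The mould `T`: `T^∅ = 1` and
`T^{n₁⋯n_r}(ε) = 1/((φ(n₁)+ε)(φ(n₁)+φ(n₂)+2ε)⋯(φ(n₁)+⋯+φ(n_r)+rε))`. -/
noncomputable def Tdef {𝒩 k : Type*} [Field k] (φ : 𝒩 → k) (l : List 𝒩) :
    LaurentSeries k :=
  (∏ i ∈ Finset.range l.length,
      ((HahnSeries.C (phiw φ (l.take (i + 1))) : LaurentSeries k) + (i + 1 : ℕ) • eps k))⁻¹

/-!
The derivation `∇_Φ`, multiplication by `Φ(n̲) = φ(n̲) + r(n̲) ε`, satisfies the Leibniz rule for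
mould multiplication, and `∇_Φ T = T × I` because the last factor of the denominator of `T^{n̲}`
is `Φ(n̲)`. Applying `∇_Φ` to `U₋ × T = U₊` shows that `X := ∇_Φ U₋ + R̃ × U₋` satisfies
`X × T = ∇_Φ U₊ - U₊ × I + R̃ × U₊`. The right-hand side has no coefficients in degrees `< 0`,
and its constant term vanishes since `R̃ × S = S × I - ∇_φ S`; the left-hand side `X` has none
in degrees `> 0` since `U₋` takes values in `K₋`. As `T^∅ = 1`, induction on the length of words
gives `X = 0`.
-/

section MouldAlgebra

variable {𝒩 A : Type*}

section Semiring

variable [Semiring A]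

lemma mmul_nil (M N : List 𝒩 → A) : mmul M N [] = M [] * N [] := by
  simp [mmul]

lemma mmul_cons (M N : List 𝒩 → A) (x : 𝒩) (n : List 𝒩) :
    mmul M N (x :: n) = M [] * N (x :: n) + mmul (fun l => M (x :: l)) N n := by
  rw [mmul, List.length_cons, Finset.sum_range_succ', add_comm]
  simp [mmul]

lemma mmul_zero_left (N : List 𝒩 → A) : mmul 0 N = 0 := by
  funext n
  simp [mmul]

lemma mmul_zero_right (M : List 𝒩 → A) : mmul M 0 = 0 := by
  funext n
  simp [mmul]

lemma mmul_add_left (M M' N : List 𝒩 → A) : mmul (M + M') N = mmul M N + mmul M' N := by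
  funext n
  simp [mmul, add_mul, Finset.sum_add_distrib]

lemma mmul_mul_left (c : A) (M N : List 𝒩 → A) :
    mmul (fun l => c * M l) N = fun n => c * mmul M N n := by
  funext n
  simp [mmul, Finset.mul_sum, mul_assoc]

lemma mmul_munit (M : List 𝒩 → A) : mmul M munit = M := by
  funext n
  rw [mmul, Finset.sum_range_succ, Finset.sum_eq_zero, zero_add]
  · simp [munit]
  · intro i hi
    have : n.drop i ≠ [] := by
      rw [ne_eq, List.drop_eq_nil_iff]
      simpa using hi
    simp [munit, this]

lemma mmul_assoc (M N P : List 𝒩 → A) : mmul (mmul M N) P = mmul M (mmul N P) := by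
  funext n
  induction n generalizing M with
  | nil => simp [mmul_nil, mul_assoc]
  | cons x n ih =>
    have hcons : (fun l => mmul M N (x :: l))
        = (fun l => M [] * N (x :: l)) + mmul (fun l => M (x :: l)) N :=
      funext (mmul_cons M N x)
    rw [mmul_cons, mmul_cons, mmul_cons, mmul_nil, hcons, mmul_add_left, mmul_mul_left]
    simp only [Pi.add_apply, ih, mul_add, mul_assoc, add_assoc]

lemma mmul_Imould_nil (M : List 𝒩 → A) : mmul M Imould [] = 0 := by
  simp [mmul_nil, Imould]

lemma mmul_Imould_append_singleton (M : List 𝒩 → A) (a : List 𝒩) (x : 𝒩) :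
    mmul M Imould (a ++ [x]) = M a := by
  rw [mmul, Finset.sum_eq_single a.length]
  · simp [Imould]
  · intro i hi hne
    simp only [Finset.mem_range, List.length_append, List.length_singleton] at hi
    have : a.length + 1 - i ≠ 1 := by omega
    simp [Imould, this]
  · simp

lemma mmul_mmul_cancel_right {M N N' : List 𝒩 → A} (h : mmul N' N = munit) :
    mmul (mmul M N') N = M := by
  rw [mmul_assoc, h, mmul_munit]

/-- Since `T^∅ = 1`, `(X × T)^{n̲} = X^{n̲}` as soon as `X` vanishes on the proper prefixes
of `n̲`. -/
lemma eq_zero_of_mmul_eq_imp {X T : List 𝒩 → A} (hT : T [] = 1)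
    (h : ∀ n, mmul X T n = X n → X n = 0) : X = 0 := by
  funext n
  induction h' : n.length using Nat.strong_induction_on generalizing n with
  | _ r ih =>
    refine h n ?_
    rw [mmul, Finset.sum_range_succ, List.take_length, List.drop_length, hT, mul_one,
      Finset.sum_eq_zero, zero_add]
    intro i hi
    have hi : i < n.length := Finset.mem_range.mp hi
    rw [ih i (h' ▸ hi) (n.take i) (by simp; omega), Pi.zero_apply, zero_mul]

end Semiring

lemma mmul_sub_left [Ring A] (M M' N : List 𝒩 → A) :
    mmul (M - M') N = mmul M N - mmul M' N := by
  funext n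
  simp [mmul, sub_mul, Finset.sum_sub_distrib]

lemma map_Imould {B : Type*} [Semiring A] [Semiring B] (f : A →+* B) :
    (fun l : List 𝒩 => f (Imould l)) = Imould := by
  funext l
  by_cases h : l.length = 1 <;> simp [Imould, h]

end MouldAlgebra

section HahnSeriesCoeff

variable {𝒩 Γ R : Type*} [AddCommMonoid Γ] [PartialOrder Γ] [IsOrderedCancelAddMonoid Γ]
  [Semiring R]

lemma coeff_mmul_C_left (M : List 𝒩 → R) (U : List 𝒩 → HahnSeries Γ R) (n : List 𝒩) (g : Γ) :
    (mmul (fun l => HahnSeries.C (M l)) U n).coeff g = mmul M (fun l => (U l).coeff g) n := by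
  simp [mmul]

lemma coeff_mmul_C_right (U : List 𝒩 → HahnSeries Γ R) (M : List 𝒩 → R) (n : List 𝒩) (g : Γ) :
    (mmul U (fun l => HahnSeries.C (M l)) n).coeff g = mmul (fun l => (U l).coeff g) M n := by
  simp [mmul, HahnSeries.coeff_mul_single_zero]

end HahnSeriesCoeff

section NablaPhi

variable {𝒩 k : Type*} [Field k] (φ : 𝒩 → k)

noncomputable def Phi (n : List 𝒩) : LaurentSeries k :=
  HahnSeries.C (phiw φ n) + n.length • eps k

noncomputable def nablaPhi (M : List 𝒩 → LaurentSeries k) : List 𝒩 → LaurentSeries k :=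
  fun n => Phi φ n * M n

lemma phiw_append (a b : List 𝒩) : phiw φ (a ++ b) = phiw φ a + phiw φ b := by
  simp [phiw]

lemma Phi_nil : Phi φ [] = 0 := by
  simp [Phi, phiw]

lemma Phi_append (a b : List 𝒩) : Phi φ (a ++ b) = Phi φ a + Phi φ b := by
  simp only [Phi, phiw_append, map_add, List.length_append, add_nsmul]
  abel

lemma coeff_Phi_mul (n : List 𝒩) (f : LaurentSeries k) (m : ℤ) :
    (Phi φ n * f).coeff m = phiw φ n * f.coeff m + n.length * f.coeff (m - 1) := by
  rw [Phi, add_mul, smul_mul_assoc, HahnSeries.coeff_add, HahnSeries.coeff_nsmul,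
    HahnSeries.C_apply, HahnSeries.coeff_single_zero_mul, Pi.smul_apply, eps,
    HahnSeries.coeff_single_mul, one_mul, nsmul_eq_mul]

lemma Phi_ne_zero [CharZero k] {n : List 𝒩} (hn : n ≠ []) : Phi φ n ≠ 0 := by
  intro h
  have h1 := coeff_Phi_mul φ n 1 1
  simp only [h, HahnSeries.coeff_zero, mul_one, HahnSeries.coeff_one] at h1
  exact hn (List.length_eq_zero_iff.mp (by simpa using h1.symm))

lemma nablaPhi_mmul (M N : List 𝒩 → LaurentSeries k) :
    nablaPhi φ (mmul M N) = mmul (nablaPhi φ M) N + mmul M (nablaPhi φ N) := by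
  funext n
  simp only [nablaPhi, mmul, Pi.add_apply, Finset.mul_sum, ← Finset.sum_add_distrib]
  refine Finset.sum_congr rfl fun i _ => ?_
  rw [show Phi φ n = Phi φ (n.take i) + Phi φ (n.drop i) by
    rw [← Phi_append, List.take_append_drop]]
  ring

lemma Tdef_nil : Tdef φ ([] : List 𝒩) = 1 := by
  simp [Tdef]

lemma Tdef_append_singleton (a : List 𝒩) (x : 𝒩) :
    Tdef φ (a ++ [x]) = Tdef φ a * (Phi φ (a ++ [x]))⁻¹ := by
  rw [Tdef, List.length_append, List.length_singleton, Finset.prod_range_succ, mul_inv, Tdef]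
  congr 2
  · refine Finset.prod_congr rfl fun i hi => ?_
    rw [List.take_append_of_le_length (by simpa using hi)]
  · rw [Phi, List.take_of_length_le (by simp), List.length_append, List.length_singleton]

lemma nablaPhi_Tdef [CharZero k] : nablaPhi φ (Tdef φ) = mmul (Tdef φ) Imould := by
  funext n
  induction n using List.reverseRecOn with
  | nil => simp [nablaPhi, Phi_nil, mmul_Imould_nil]
  | append_singleton a x _ =>
    rw [nablaPhi, mmul_Imould_append_singleton, Tdef_append_singleton, mul_left_comm,
      mul_inv_cancel₀ (Phi_ne_zero φ (by simp)), mul_one]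

end NablaPhi

section BirkhoffCoefficients

variable {𝒩 k : Type*} [Field k] (φ : 𝒩 → k)

lemma coeff_nablaPhi_add_mmul_C_of_pos {Um : List 𝒩 → LaurentSeries k} (hUm0 : Um [] = 1)
    (hUm : ∀ n : List 𝒩, n ≠ [] → Kminus (Um n)) (R : List 𝒩 → k) (n : List 𝒩) {m : ℤ}
    (hm : 0 < m) :
    ((nablaPhi φ Um + mmul (fun l => HahnSeries.C (R l)) Um) n).coeff m = 0 := by
  have hUm_pos : (fun l => (Um l).coeff m) = 0 := by
    funext l
    rcases eq_or_ne l [] with rfl | hl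
    · simp [hUm0, HahnSeries.coeff_one, hm.ne']
    · exact hUm l hl m hm.le
  have hlen : (n.length : k) * (Um n).coeff (m - 1) = 0 := by
    rcases eq_or_ne n [] with rfl | hn
    · simp
    · rw [hUm n hn _ (by omega), mul_zero]
  rw [Pi.add_apply, HahnSeries.coeff_add, nablaPhi, coeff_Phi_mul, coeff_mmul_C_left, hUm_pos,
    mmul_zero_right, hlen, congrFun hUm_pos n]
  simp

lemma coeff_nablaPhi_sub_mmul_Imould_add_mmul_C_of_nonpos {Up : List 𝒩 → LaurentSeries k}
    (hUp : ∀ n : List 𝒩, Kplus (Up n)) (R : List 𝒩 → k)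
    (hR : mmul R (fun l => (Up l).coeff 0)
      = mmul (fun l => (Up l).coeff 0) Imould - fun l => phiw φ l * (Up l).coeff 0)
    (n : List 𝒩) {m : ℤ} (hm : m ≤ 0) :
    ((nablaPhi φ Up - mmul Up Imould + mmul (fun l => HahnSeries.C (R l)) Up) n).coeff m = 0 := by
  rw [← map_Imould (HahnSeries.C : k →+* LaurentSeries k)]
  simp only [Pi.add_apply, Pi.sub_apply, HahnSeries.coeff_add, HahnSeries.coeff_sub, nablaPhi,
    coeff_Phi_mul, coeff_mmul_C_left, coeff_mmul_C_right, hUp n (m - 1) (by omega), mul_zero,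
    add_zero]
  rcases hm.lt_or_eq with hm | rfl
  · have hUp_neg : (fun l => (Up l).coeff m) = 0 := funext fun l => hUp l m hm
    simp [hUp_neg, hUp n m hm, mmul_zero_left, mmul_zero_right]
  · rw [hR, Pi.sub_apply]
    ring

end BirkhoffCoefficients

theorem nablaPhi_Uminus_general
    {𝒩 k : Type*} [Field k] [CharZero k] (φ : 𝒩 → k)
    (Um Up : List 𝒩 → LaurentSeries k)
    (hUm0 : Um [] = 1)
    (hUm : ∀ n : List 𝒩, n ≠ [] → Kminus (Um n))
    (hUp : ∀ n : List 𝒩, Kplus (Up n))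
    (hEq : mmul Um (Tdef φ) = Up)
    (S : List 𝒩 → k) (hS : S = fun n => (Up n).coeff 0)
    (Sinv : List 𝒩 → k)
    (hSinv : mmul S Sinv = munit ∧ mmul Sinv S = munit)
    (Rt : List 𝒩 → k)
    (hRt : Rt = fun n =>
      mmul (mmul S Imould) Sinv n - mmul (fun m => phiw φ m * S m) Sinv n) :
    (fun n : List 𝒩 =>
        ((HahnSeries.C (phiw φ n) : LaurentSeries k) + n.length • eps k) * Um n) =
      (fun n : List 𝒩 =>
        -mmul (fun l => (HahnSeries.C (Rt l) : LaurentSeries k)) Um n) := by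
  have hRS : mmul Rt S = mmul S Imould - fun m => phiw φ m * S m := by
    rw [hRt]
    exact (mmul_sub_left _ _ S).trans
      (by rw [mmul_mmul_cancel_right hSinv.2, mmul_mmul_cancel_right hSinv.2])
  subst hS
  set CR : List 𝒩 → LaurentSeries k := fun l => HahnSeries.C (Rt l)
  have hLeibniz := nablaPhi_mmul φ Um (Tdef φ)
  rw [hEq, nablaPhi_Tdef, ← mmul_assoc, hEq] at hLeibniz
  have hX : mmul (nablaPhi φ Um + mmul CR Um) (Tdef φ)
      = nablaPhi φ Up - mmul Up Imould + mmul CR Up := by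
    rw [mmul_add_left, mmul_assoc, hEq, hLeibniz]
    abel
  have hX0 : nablaPhi φ Um + mmul CR Um = 0 := by
    refine eq_zero_of_mmul_eq_imp (Tdef_nil φ) fun n hn => ?_
    refine HahnSeries.coeff_injective (funext fun m => ?_)
    rcases le_or_gt m 0 with hm | hm
    · rw [← hn, hX]
      exact coeff_nablaPhi_sub_mmul_Imould_add_mmul_C_of_nonpos φ hUp Rt hRS n hm
    · exact coeff_nablaPhi_add_mmul_C_of_pos φ hUm0 hUm Rt n hm
  funext n
  exact eq_neg_of_add_eq_zero_left (congrFun hX0 n)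

/-- with `(U₋, U₊)` the Birkhoff decomposition of `T`,
`S` the mould of constant terms of `U₊` (with inverse `S⁻¹` in the mould algebra) and
`R̃ = S × I × S⁻¹ − (∇_φ S) × S⁻¹`, one has `∇_Φ U₋ = −R̃ × U₋`. -/
theorem nablaPhi_Uminus
    {𝒩 k : Type*} [Nonempty 𝒩] [Field k] [CharZero k] (φ : 𝒩 → k)
    (Um Up : List 𝒩 → LaurentSeries k)
    (hUm0 : Um [] = 1) (hUp0 : Up [] = 1)
    (hUm : ∀ n : List 𝒩, n ≠ [] → Kminus (Um n))
    (hUp : ∀ n : List 𝒩, Kplus (Up n))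
    (hEq : mmul Um (Tdef φ) = Up)
    (S : List 𝒩 → k) (hS : S = fun n => (Up n).coeff 0)
    (Sinv : List 𝒩 → k)
    (hSinv : mmul S Sinv = munit ∧ mmul Sinv S = munit)
    (Rt : List 𝒩 → k)
    (hRt : Rt = fun n =>
      mmul (mmul S Imould) Sinv n - mmul (fun m => phiw φ m * S m) Sinv n) :
    (fun n : List 𝒩 =>
        ((HahnSeries.C (phiw φ n) : LaurentSeries k) + n.length • eps k) * Um n) =
      (fun n : List 𝒩 =>
        -mmul (fun l => (HahnSeries.C (Rt l) : LaurentSeries k)) Um n) :=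
  nablaPhi_Uminus_general φ Um Up hUm0 hUm hUp hEq S hS Sinv hSinv Rt hRt
end

section
/- Let 𝒩 be a nonempty set and k a commutative ring. If M and N are alternal k-valued moulds, then the commutator M × N − N × M is an alternal mould; that is, alternal moulds form a Lie subalgebra of the mould algebra k^𝒩̲ equipped with the commutator bracket. -/
open scoped Classical

/-- A mould `M` is alternal if `M^∅ = 0` and
`∑_n sh^{a,b}_n M^n = 0` for all nonempty words `a`, `b`. -/
def Alternal {𝒩 A : Type*} [CommSemiring A] (M : List 𝒩 → A) : Prop :=
  M [] = 0 ∧ ∀ a b : List 𝒩, a ≠ [] → b ≠ [] →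
    (∑ᶠ n : List 𝒩, (sh a b n : A) * M n) = 0

section Aux

variable {𝒩 : Type*}

/-- helper for the left part of the recursion for `sh`. -/
noncomputable def shL (a b m : List 𝒩) (z : 𝒩) : ℕ :=
  match a with
  | [] => 0
  | x :: a' => if x = z then sh a' b m else 0

/-- helper for the right part of the recursion for `sh`. -/
noncomputable def shR (a b m : List 𝒩) (z : 𝒩) : ℕ :=
  match b with
  | [] => 0
  | y :: b' => if y = z then sh a b' m else 0

@[simp] lemma shL_nil (b m : List 𝒩) (z : 𝒩) : shL [] b m z = 0 := rfl
@[simp] lemma shL_cons (x : 𝒩) (a' b m : List 𝒩) (z : 𝒩) :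
    shL (x :: a') b m z = if x = z then sh a' b m else 0 := rfl
@[simp] lemma shR_nil (a m : List 𝒩) (z : 𝒩) : shR a [] m z = 0 := rfl
@[simp] lemma shR_cons (y : 𝒩) (a b' m : List 𝒩) (z : 𝒩) :
    shR a (y :: b') m z = if y = z then sh a b' m else 0 := rfl

lemma sh_nil_left (b n : List 𝒩) : sh [] b n = if b = n then 1 else 0 := by
  cases b <;> simp [sh]

lemma sh_nil_right (a n : List 𝒩) : sh a [] n = if a = n then 1 else 0 := by
  cases a <;> simp [sh]

lemma sh_nil (a b : List 𝒩) : sh a b [] = if a = [] ∧ b = [] then 1 else 0 := by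
  cases a <;> cases b <;> simp [sh]

lemma sh_cons (a b : List 𝒩) (z : 𝒩) (m : List 𝒩) :
    sh a b (z :: m) = shL a b m z + shR a b m z := by
  cases a <;> cases b <;> simp [sh, sh_nil_left, sh_nil_right, List.cons_eq_cons, ite_and]

lemma sh_perm : ∀ (n a b : List 𝒩), sh a b n ≠ 0 → n.Perm (a ++ b) := by
  intro n
  induction n with
  | nil =>
    intro a b h
    rw [sh_nil] at h
    rcases a with _ | _ <;> rcases b with _ | _ <;> simp_all
  | cons z n ih =>
    intro a b h
    rcases a with _ | ⟨x, a⟩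
    · rw [sh_nil_left] at h
      have : b = z :: n := by by_contra hc; simp [hc] at h
      simp [this]
    rcases b with _ | ⟨y, b⟩
    · rw [sh_nil_right] at h
      have : x :: a = z :: n := by by_contra hc; simp [hc] at h
      simp [← this]
    rw [sh] at h
    have key : (x = z ∧ sh a (y :: b) n ≠ 0) ∨ (y = z ∧ sh (x :: a) b n ≠ 0) := by
      by_cases hx : x = z <;> by_cases hy : y = z <;> simp [hx, hy] at h ⊢ <;> omega
    rcases key with ⟨hx, hne⟩ | ⟨hy, hne⟩
    · subst hx
      exact ((ih _ _ hne).cons x)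
    · subst hy
      exact ((ih _ _ hne).cons y).trans List.perm_middle.symm

lemma sh_append : ∀ (u v a b : List 𝒩),
    sh a b (u ++ v) =
      ∑ r ∈ Finset.range (a.length + 1), ∑ s ∈ Finset.range (b.length + 1),
        sh (a.take r) (b.take s) u * sh (a.drop r) (b.drop s) v := by
  intro u
  induction u with
  | nil =>
    intro v a b
    simp only [List.nil_append]
    rw [Finset.sum_eq_single 0]
    · rw [Finset.sum_eq_single 0]
      · simp [sh]
      · intro s hs hs0
        have hb : b ≠ [] := by
          intro h; subst h; simp at hs; omega
        rw [sh_nil]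
        simp [List.take_eq_nil_iff, hs0, hb]
      · intro h; simp at h
    · intro r hr hr0
      have ha : a ≠ [] := by
        intro h; subst h; simp at hr; omega
      apply Finset.sum_eq_zero
      intro s _
      rw [sh_nil]
      simp [List.take_eq_nil_iff, hr0, ha]
    · intro h; simp at h
  | cons z u ih =>
    intro v a b
    simp only [List.cons_append]
    have expand : ∀ r s : ℕ,
        sh (a.take r) (b.take s) (z :: u) * sh (a.drop r) (b.drop s) v =
          shL (a.take r) (b.take s) u z * sh (a.drop r) (b.drop s) v +
          shR (a.take r) (b.take s) u z * sh (a.drop r) (b.drop s) v := by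
      intro r s
      rw [sh_cons, add_mul]
    simp only [expand, Finset.sum_add_distrib]
    have hL : (∑ r ∈ Finset.range (a.length + 1), ∑ s ∈ Finset.range (b.length + 1),
        shL (a.take r) (b.take s) u z * sh (a.drop r) (b.drop s) v) = shL a b (u ++ v) z := by
      rcases a with _ | ⟨x, a'⟩
      · simp
      · simp only [List.length_cons]
        rw [Finset.sum_range_succ']
        simp only [List.take_zero, List.take_succ_cons, List.drop_succ_cons, List.drop_zero,
          shL_nil, shL_cons, zero_mul, Finset.sum_const_zero, add_zero]
        by_cases hx : x = z
        · simp only [hx, if_true]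
          rw [ih v a' b]
        · simp [hx]
    have hR : (∑ r ∈ Finset.range (a.length + 1), ∑ s ∈ Finset.range (b.length + 1),
        shR (a.take r) (b.take s) u z * sh (a.drop r) (b.drop s) v) = shR a b (u ++ v) z := by
      rw [Finset.sum_comm]
      rcases b with _ | ⟨y, b'⟩
      · simp
      · simp only [List.length_cons]
        rw [Finset.sum_range_succ']
        simp only [List.take_zero, List.take_succ_cons, List.drop_succ_cons, List.drop_zero,
          shR_nil, shR_cons, zero_mul, Finset.sum_const_zero, add_zero]
        by_cases hy : y = z
        · simp only [hy, if_true]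
          rw [ih v a b']
          exact Finset.sum_comm
        · simp [hy]
    rw [hL, hR, ← sh_cons]

variable {k : Type*} [CommRing k]

lemma esum_support (p q : List 𝒩) (F : List 𝒩 → k) :
    Function.support (fun n => (sh p q n : k) * F n) ⊆ ↑((p ++ q).permutations.toFinset) := by
  intro n hn
  simp only [Function.mem_support] at hn
  have hsh : sh p q n ≠ 0 := by
    intro h0; rw [h0] at hn; simp at hn
  simp only [Finset.coe_sort_coe, Finset.mem_coe, List.mem_toFinset, List.mem_permutations]
  exact sh_perm n p q hsh

lemma esum_eq_sum (p q : List 𝒩) (F : List 𝒩 → k) :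
    (∑ᶠ n, (sh p q n : k) * F n) = ∑ n ∈ (p ++ q).permutations.toFinset, (sh p q n : k) * F n :=
  finsum_eq_finset_sum_of_support_subset _ (esum_support p q F)

lemma esum_finite (p q : List 𝒩) (F : List 𝒩 → k) :
    (Function.support fun n => (sh p q n : k) * F n).Finite :=
  Set.Finite.subset ((p ++ q).permutations.toFinset.finite_toSet) (esum_support p q F)

lemma esum_nil_left (q : List 𝒩) (F : List 𝒩 → k) :
    (∑ᶠ n, (sh [] q n : k) * F n) = F q := by
  rw [finsum_eq_single _ q]
  · simp [sh_nil_left]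
  · intro n hn
    simp [sh_nil_left, Ne.symm hn]

lemma esum_nil_right (p : List 𝒩) (F : List 𝒩 → k) :
    (∑ᶠ n, (sh p [] n : k) * F n) = F p := by
  rw [finsum_eq_single _ p]
  · simp [sh_nil_right]
  · intro n hn
    simp [sh_nil_right, Ne.symm hn]

lemma esum_eval {M : List 𝒩 → k} (hM : Alternal M) (p q : List 𝒩) :
    (∑ᶠ n, (sh p q n : k) * M n) =
      if p = [] then M q else if q = [] then M p else 0 := by
  by_cases hp : p = []
  · subst hp; simp [esum_nil_left]
  by_cases hq : q = []
  · subst hq; simp [esum_nil_right, hp]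
  simp only [hp, hq, if_false]
  exact hM.2 p q hp hq

lemma sh_inner_sum (M N : List 𝒩 → k) (a b : List 𝒩) (r s : ℕ)
    (hr : r ≤ a.length) (hs : s ≤ b.length) :
    (∑ i ∈ Finset.range ((a ++ b).length + 1), ∑ n ∈ (a ++ b).permutations.toFinset,
      ((sh (a.take r) (b.take s) (n.take i) : k) * M (n.take i)) *
        ((sh (a.drop r) (b.drop s) (n.drop i) : k) * N (n.drop i))) =
    (∑ᶠ u, (sh (a.take r) (b.take s) u : k) * M u) *
      (∑ᶠ v, (sh (a.drop r) (b.drop s) v : k) * N v) := by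
  have ha1 : (a.take r).length = r := by rw [List.length_take]; omega
  have hb1 : (b.take s).length = s := by rw [List.length_take]; omega
  set T := ((a.take r ++ b.take s)).permutations.toFinset with hT
  set T' := ((a.drop r ++ b.drop s)).permutations.toFinset with hT'
  have hTlen : ∀ u ∈ T, u.length = r + s := by
    intro u hu
    simp only [hT, List.mem_toFinset, List.mem_permutations] at hu
    rw [hu.length_eq, List.length_append, ha1, hb1]
  have hGmem : ∀ u : List 𝒩, (sh (a.take r) (b.take s) u : k) * M u ≠ 0 → u ∈ T := by
    intro u hu
    have hsh : sh (a.take r) (b.take s) u ≠ 0 := by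
      intro h0; rw [h0] at hu; simp at hu
    simp only [hT, List.mem_toFinset, List.mem_permutations]
    exact sh_perm _ _ _ hsh
  have hHmem : ∀ v : List 𝒩, (sh (a.drop r) (b.drop s) v : k) * N v ≠ 0 → v ∈ T' := by
    intro v hv
    have hsh : sh (a.drop r) (b.drop s) v ≠ 0 := by
      intro h0; rw [h0] at hv; simp at hv
    simp only [hT', List.mem_toFinset, List.mem_permutations]
    exact sh_perm _ _ _ hsh
  -- kill the terms with i ≠ r + s
  rw [Finset.sum_eq_single (r + s)]
  · -- the main term
    rw [esum_eq_sum, esum_eq_sum, Finset.sum_mul_sum, ← hT, ← hT']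
    -- rewrite the double sum as a sum over the product finset
    rw [← Finset.sum_product']
    have hinj : ∀ p ∈ T ×ˢ T', ∀ q ∈ T ×ˢ T',
        (fun p : List 𝒩 × List 𝒩 => p.1 ++ p.2) p = (fun p : List 𝒩 × List 𝒩 => p.1 ++ p.2) q →
          p = q := by
      intro p hp q hq hpq
      simp only [Finset.mem_product] at hp hq
      have h1 : p.1.length = q.1.length := by
        rw [hTlen p.1 hp.1, hTlen q.1 hq.1]
      obtain ⟨e1, e2⟩ := List.append_inj hpq h1
      exact Prod.ext e1 e2
    have himg : (∑ n ∈ (T ×ˢ T').image (fun p : List 𝒩 × List 𝒩 => p.1 ++ p.2),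
        ((sh (a.take r) (b.take s) (n.take (r + s)) : k) * M (n.take (r + s))) *
          ((sh (a.drop r) (b.drop s) (n.drop (r + s)) : k) * N (n.drop (r + s)))) =
        ∑ p ∈ T ×ˢ T',
          ((sh (a.take r) (b.take s) p.1 : k) * M p.1) *
            ((sh (a.drop r) (b.drop s) p.2 : k) * N p.2) := by
      rw [Finset.sum_image hinj]
      refine Finset.sum_congr rfl fun p hp => ?_
      simp only [Finset.mem_product] at hp
      have hlen : p.1.length = r + s := hTlen p.1 hp.1
      rw [List.take_left' hlen, List.drop_left' hlen]
    rw [← himg]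
    refine (Finset.sum_subset ?_ ?_).symm
    · -- image ⊆ permutations of a ++ b
      intro n hn
      obtain ⟨p, hp, rfl⟩ := Finset.mem_image.mp hn
      simp only [Finset.mem_product, hT, hT', List.mem_toFinset, List.mem_permutations] at hp ⊢
      refine (hp.1.append hp.2).trans ?_
      have e1 : (a.take r ++ b.take s) ++ (a.drop r ++ b.drop s)
          = a.take r ++ (b.take s ++ (a.drop r ++ b.drop s)) := List.append_assoc _ _ _
      have e2 : a ++ b = a.take r ++ (a.drop r ++ (b.take s ++ b.drop s)) := by
        rw [← List.append_assoc, List.take_append_drop, List.take_append_drop]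
      rw [e1, e2]
      exact List.Perm.append_left _ (List.perm_append_comm_assoc _ _ _)
    · -- terms in S outside the image vanish
      intro n hn hnotin
      by_contra h0
      have hG : (sh (a.take r) (b.take s) (n.take (r + s)) : k) * M (n.take (r + s)) ≠ 0 := by
        intro hz; rw [hz] at h0; simp at h0
      have hH : (sh (a.drop r) (b.drop s) (n.drop (r + s)) : k) * N (n.drop (r + s)) ≠ 0 := by
        intro hz; rw [hz] at h0; simp at h0
      exact hnotin (Finset.mem_image.mpr ⟨(n.take (r + s), n.drop (r + s)),
        Finset.mem_product.2 ⟨hGmem _ hG, hHmem _ hH⟩, List.take_append_drop _ _⟩)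
  · -- i ≠ r + s gives zero
    intro i hi hine
    apply Finset.sum_eq_zero
    intro n hn
    by_contra h0
    have hG : (sh (a.take r) (b.take s) (n.take i) : k) * M (n.take i) ≠ 0 := by
      intro hz; rw [hz] at h0; simp at h0
    have hlen : (n.take i).length = r + s := hTlen _ (hGmem _ hG)
    have hnlen : n.length = (a ++ b).length := by
      simp only [List.mem_toFinset, List.mem_permutations] at hn
      exact hn.length_eq
    rw [List.length_take] at hlen
    simp only [Finset.mem_range] at hi
    omega
  · intro h
    exfalso
    apply h
    simp only [Finset.mem_range, List.length_append]
    omega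

lemma double_ind (A B na nb : ℕ) (hA : A < na) (hB : B < nb) (c : k) :
    (∑ r ∈ Finset.range na, ∑ s ∈ Finset.range nb,
      (if r = A ∧ s = B then c else 0)) = c := by
  rw [Finset.sum_eq_single A]
  · rw [Finset.sum_eq_single B]
    · simp
    · intro s _ hsB; simp [hsB]
    · intro h; exact absurd (Finset.mem_range.2 hB) h
  · intro r _ hrA
    apply Finset.sum_eq_zero
    intro s _
    simp [hrA]
  · intro h; exact absurd (Finset.mem_range.2 hA) h

lemma key_mmul (M N : List 𝒩 → k) (hM : Alternal M) (hN : Alternal N)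
    {a b : List 𝒩} (ha : a ≠ []) (hb : b ≠ []) :
    (∑ᶠ n, (sh a b n : k) * mmul M N n) = M a * N b + M b * N a := by
  rw [esum_eq_sum]
  have step1 : ∀ n ∈ (a ++ b).permutations.toFinset,
      (sh a b n : k) * mmul M N n =
        ∑ i ∈ Finset.range ((a ++ b).length + 1),
          ∑ r ∈ Finset.range (a.length + 1), ∑ s ∈ Finset.range (b.length + 1),
            ((sh (a.take r) (b.take s) (n.take i) : k) * M (n.take i)) *
              ((sh (a.drop r) (b.drop s) (n.drop i) : k) * N (n.drop i)) := by
    intro n hn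
    have hlen : n.length = (a ++ b).length := by
      simp only [List.mem_toFinset, List.mem_permutations] at hn
      exact hn.length_eq
    simp only [mmul, hlen]
    rw [Finset.mul_sum]
    refine Finset.sum_congr rfl fun i _ => ?_
    have hsh : sh a b n =
        ∑ r ∈ Finset.range (a.length + 1), ∑ s ∈ Finset.range (b.length + 1),
          sh (a.take r) (b.take s) (n.take i) * sh (a.drop r) (b.drop s) (n.drop i) := by
      conv_lhs => rw [← List.take_append_drop i n]
      exact sh_append _ _ _ _
    rw [hsh]
    push_cast
    rw [Finset.sum_mul]
    refine Finset.sum_congr rfl fun r _ => ?_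
    rw [Finset.sum_mul]
    refine Finset.sum_congr rfl fun s _ => ?_
    ring
  rw [Finset.sum_congr rfl step1]
  rw [Finset.sum_comm]
  have swap2 : (∑ i ∈ Finset.range ((a ++ b).length + 1), ∑ n ∈ (a ++ b).permutations.toFinset,
      ∑ r ∈ Finset.range (a.length + 1), ∑ s ∈ Finset.range (b.length + 1),
        ((sh (a.take r) (b.take s) (n.take i) : k) * M (n.take i)) *
          ((sh (a.drop r) (b.drop s) (n.drop i) : k) * N (n.drop i))) =
      ∑ r ∈ Finset.range (a.length + 1), ∑ s ∈ Finset.range (b.length + 1),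
        ∑ i ∈ Finset.range ((a ++ b).length + 1), ∑ n ∈ (a ++ b).permutations.toFinset,
          ((sh (a.take r) (b.take s) (n.take i) : k) * M (n.take i)) *
            ((sh (a.drop r) (b.drop s) (n.drop i) : k) * N (n.drop i)) := by
    have e1 : ∀ i ∈ Finset.range ((a ++ b).length + 1),
        (∑ n ∈ (a ++ b).permutations.toFinset,
          ∑ r ∈ Finset.range (a.length + 1), ∑ s ∈ Finset.range (b.length + 1),
            ((sh (a.take r) (b.take s) (n.take i) : k) * M (n.take i)) *
              ((sh (a.drop r) (b.drop s) (n.drop i) : k) * N (n.drop i))) =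
        ∑ r ∈ Finset.range (a.length + 1), ∑ s ∈ Finset.range (b.length + 1),
          ∑ n ∈ (a ++ b).permutations.toFinset,
            ((sh (a.take r) (b.take s) (n.take i) : k) * M (n.take i)) *
              ((sh (a.drop r) (b.drop s) (n.drop i) : k) * N (n.drop i)) := by
      intro i _
      rw [Finset.sum_comm]
      exact Finset.sum_congr rfl fun r _ => Finset.sum_comm
    rw [Finset.sum_congr rfl e1, Finset.sum_comm]
    exact Finset.sum_congr rfl fun r _ => Finset.sum_comm
  rw [swap2]
  have step3 : ∀ r ∈ Finset.range (a.length + 1), ∀ s ∈ Finset.range (b.length + 1), True := fun _ _ _ _ => trivial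
  clear step3
  have hfin : (∑ r ∈ Finset.range (a.length + 1), ∑ s ∈ Finset.range (b.length + 1),
      ∑ i ∈ Finset.range ((a ++ b).length + 1), ∑ n ∈ (a ++ b).permutations.toFinset,
        ((sh (a.take r) (b.take s) (n.take i) : k) * M (n.take i)) *
          ((sh (a.drop r) (b.drop s) (n.drop i) : k) * N (n.drop i))) =
      ∑ r ∈ Finset.range (a.length + 1), ∑ s ∈ Finset.range (b.length + 1),
        ((if r = a.length ∧ s = 0 then M a * N b else 0) +
          (if r = 0 ∧ s = b.length then M b * N a else 0)) := by
    refine Finset.sum_congr rfl fun r hr => Finset.sum_congr rfl fun s hs => ?_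
    simp only [Finset.mem_range] at hr hs
    rw [sh_inner_sum M N a b r s (by omega) (by omega), esum_eval hM, esum_eval hN]
    have hta : (a.take r = []) ↔ r = 0 := by simp [List.take_eq_nil_iff, ha]
    have htb : (b.take s = []) ↔ s = 0 := by simp [List.take_eq_nil_iff, hb]
    have hda : (a.drop r = []) ↔ r = a.length := by rw [List.drop_eq_nil_iff]; omega
    have hdb : (b.drop s = []) ↔ s = b.length := by rw [List.drop_eq_nil_iff]; omega
    have haL : a.length ≠ 0 := fun h => ha (List.length_eq_zero_iff.mp h)
    have hbL : b.length ≠ 0 := fun h => hb (List.length_eq_zero_iff.mp h)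
    have h0a : (0:ℕ) ≠ a.length := fun h => haL h.symm
    have h0b : (0:ℕ) ≠ b.length := fun h => hbL h.symm
    by_cases hr0 : r = 0
    · subst hr0
      by_cases hsB : s = b.length
      · subst hsB
        simp [ha, hb, List.take_length, List.drop_length, h0a]
      · have h1 : b.drop s ≠ [] := fun h => hsB (hdb.mp h)
        simp [ha, h1, hsB, h0a]
    · by_cases hrA : r = a.length
      · subst hrA
        by_cases hs0 : s = 0
        · subst hs0
          simp [ha, hb, List.take_length, List.drop_length, haL, h0b]
        · have h1 : b.take s ≠ [] := fun h => hs0 (htb.mp h)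
          simp [ha, h1, hs0, List.take_length, List.drop_length, haL]
      · have h1 : a.take r ≠ [] := fun h => hr0 (hta.mp h)
        have h2 : a.drop r ≠ [] := fun h => hrA (hda.mp h)
        by_cases hs0 : s = 0
        · subst hs0
          simp [h1, h2, hb, hr0, hrA]
        · have h3 : b.take s ≠ [] := fun h => hs0 (htb.mp h)
          simp [h1, h2, h3, hr0, hrA, hs0]
  rw [hfin]
  simp only [Finset.sum_add_distrib]
  rw [double_ind a.length 0 (a.length + 1) (b.length + 1) (by omega) (by omega) (M a * N b),
    double_ind 0 b.length (a.length + 1) (b.length + 1) (by omega) (by omega) (M b * N a)]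

end Aux

/-- the commutator of two alternal moulds is alternal
(alternal moulds form a Lie subalgebra of the mould algebra). -/
theorem alternal_commutator
    {𝒩 k : Type*} [Nonempty 𝒩] [CommRing k]
    (M N : List 𝒩 → k) (hM : Alternal M) (hN : Alternal N) :
    Alternal (fun n => mmul M N n - mmul N M n) := by
  constructor
  · simp [mmul, hM.1]
  · intro a b ha hb
    have fin1 := esum_finite a b (mmul M N)
    have fin2 := esum_finite a b (mmul N M)
    simp only [mul_sub]
    rw [finsum_sub_distrib fin1 fin2, key_mmul M N hM hN ha hb, key_mmul N M hN hM ha hb]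
    ring
end
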